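/- Let d be a dense database of range size N, let 1 ≤ i ≤ N, and let i ≤ i_1 < i_2 < ⋯ < i_k ≤ N. Then the volumes v(i,i_1), v(i,i_2), …, v(i,i_k) are k pairwise distinct vertices of the exact-volume graph G that are pairwise adjacent; that is, they form a clique of size k in G. (For r < s the witnessing third volume is v(i_r + 1, i_s) ∈ V, since v(i,i_s) = v(i,i_r) + v(i_r + 1, i_s).) -/

import Mathlib

/-! For `r < s`, `v(i,i_s) = v(i,i_r) + v(i_r+1,i_s)` and the gap volume `v(i_r+1,i_s)` is itself a
volume; density makes it positive, so the `k` volumes are distinct and pairwise adjacent. -/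

/-- The volume of the range `[a,b]` of a database `d`. -/
def dbVol (d : ℕ → ℕ) (a b : ℕ) : ℕ := ∑ k ∈ Finset.Icc a b, d k

/-- The set of all range-query volumes of a database of range size `N`. -/
def volSet (d : ℕ → ℕ) (N : ℕ) : Set ℕ :=
  {x | ∃ a b, 1 ≤ a ∧ a ≤ b ∧ b ≤ N ∧ x = dbVol d a b}

/-- The exact-volume graph on a set `V` of volumes: distinct `u, w ∈ V` are
adjacent iff there is `z ∈ V` with `u = w + z` or `w = u + z`. -/
def exactGraph (V : Set ℕ) : SimpleGraph ℕ where
  Adj u w := u ≠ w ∧ u ∈ V ∧ w ∈ V ∧ ∃ z ∈ V, u = w + z ∨ w = u + z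
  symm := ⟨by
    rintro u w ⟨h1, h2, h3, z, hz, h4⟩
    exact ⟨h1.symm, h3, h2, z, hz, h4.symm⟩⟩
  loopless := ⟨by rintro u ⟨h, _⟩; exact h rfl⟩

namespace SimpleGraph

theorem isNClique_image_univ {α ι : Type*} [DecidableEq α] [Fintype ι] {G : SimpleGraph α}
    {f : ι → α} (hadj : ∀ r s, r ≠ s → G.Adj (f r) (f s)) :
    G.IsNClique (Fintype.card ι) (Finset.univ.image f) := by
  have hf : Function.Injective f := fun r s hrs => by
    by_contra hne
    exact (hadj r s hne).ne hrs
  refine ⟨?_, by rw [Finset.card_image_of_injective _ hf, Finset.card_univ]⟩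
  rintro _ hu _ hw hne
  obtain ⟨r, -, rfl⟩ := Finset.mem_coe.1 hu |> Finset.mem_image.1
  obtain ⟨s, -, rfl⟩ := Finset.mem_coe.1 hw |> Finset.mem_image.1
  exact hadj r s (ne_of_apply_ne f hne)

end SimpleGraph

theorem exactGraph_adj_add {V : Set ℕ} {u z : ℕ} (hu : u ∈ V) (hz : z ∈ V) (huz : u + z ∈ V)
    (hz0 : z ≠ 0) : (exactGraph V).Adj u (u + z) :=
  ⟨by omega, hu, huz, z, hz, Or.inr rfl⟩

theorem dbVol_add_dbVol (d : ℕ → ℕ) {a b c : ℕ} (hab : a ≤ b + 1) (hbc : b ≤ c) :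
    dbVol d a b + dbVol d (b + 1) c = dbVol d a c := by
  have hunion : Finset.Icc a b ∪ Finset.Ioc b c = Finset.Icc a c := by
    ext x
    simp only [Finset.mem_union, Finset.mem_Icc, Finset.mem_Ioc]
    omega
  have hdisj : Disjoint (Finset.Icc a b) (Finset.Ioc b c) := by
    simp only [Finset.disjoint_left, Finset.mem_Icc, Finset.mem_Ioc]
    omega
  rw [dbVol, dbVol, dbVol, Finset.Icc_add_one_left_eq_Ioc, ← Finset.sum_union hdisj, hunion]

theorem dbVol_pos (d : ℕ → ℕ) {a b : ℕ} (hab : a ≤ b) (hb : 0 < d b) : 0 < dbVol d a b :=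
  hb.trans_le <| Finset.single_le_sum (fun _ _ => Nat.zero_le _) (Finset.mem_Icc.2 ⟨hab, le_rfl⟩)

theorem stmt_3_general (N : ℕ) (d : ℕ → ℕ)
    (hdense : ∀ m, 1 ≤ m → m ≤ N → 1 ≤ d m)
    (i : ℕ) (hi : 1 ≤ i)
    (k : ℕ) (idx : Fin k → ℕ)
    (hmono : StrictMono idx) (hlo : ∀ r, i ≤ idx r) (hhi : ∀ r, idx r ≤ N) :
    (∀ r, dbVol d i (idx r) ∈ volSet d N) ∧
    (exactGraph (volSet d N)).IsNClique k
      (Finset.univ.image (fun r : Fin k => dbVol d i (idx r))) := by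
  have hmem : ∀ r, dbVol d i (idx r) ∈ volSet d N :=
    fun r => ⟨i, idx r, hi, hlo r, hhi r, rfl⟩
  have hadj : ∀ r s, r < s →
      (exactGraph (volSet d N)).Adj (dbVol d i (idx r)) (dbVol d i (idx s)) := by
    intro r s hrs
    have hlt : idx r < idx s := hmono hrs
    have hgap : dbVol d (idx r + 1) (idx s) ∈ volSet d N :=
      ⟨idx r + 1, idx s, by omega, hlt, hhi s, rfl⟩
    have hgap_pos : 0 < dbVol d (idx r + 1) (idx s) :=
      dbVol_pos d hlt (hdense _ (by omega) (hhi s))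
    have hsplit := dbVol_add_dbVol d ((hlo r).trans (Nat.le_succ _)) hlt.le
    exact hsplit ▸ exactGraph_adj_add (hmem r) hgap (hsplit ▸ hmem s) hgap_pos.ne'
  refine ⟨hmem, ?_⟩
  simpa using SimpleGraph.isNClique_image_univ (G := exactGraph (volSet d N))
    fun r s hne => hne.lt_or_gt.elim (hadj r s) fun hsr => (hadj s r hsr).symm

/-- For a dense database and indices `i ≤ i₁ < i₂ < ⋯ < i_k ≤ N`, the volumes
`v(i,i₁), …, v(i,i_k)` form a clique of size `k` in the exact-volume graph. -/
theorem stmt_3 (N : ℕ) (hN : 1 ≤ N) (d : ℕ → ℕ)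
    (hdense : ∀ m, 1 ≤ m → m ≤ N → 1 ≤ d m)
    (i : ℕ) (hi : 1 ≤ i) (hiN : i ≤ N)
    (k : ℕ) (idx : Fin k → ℕ)
    (hmono : StrictMono idx) (hlo : ∀ r, i ≤ idx r) (hhi : ∀ r, idx r ≤ N) :
    (∀ r, dbVol d i (idx r) ∈ volSet d N) ∧
    (exactGraph (volSet d N)).IsNClique k
      (Finset.univ.image (fun r : Fin k => dbVol d i (idx r))) :=
  stmt_3_general N d hdense i hi k idx hmono hlo hhi
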